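/- arXiv:1210.1609 — 5 statements merged into one kernel-verified Lean document; each statement's English description precedes it below -/
import Mathlib

section
/- Let R ∈ L¹(ℝ) be even with ∫_ℝ R(x) dx = 1, let k ≠ 0 and A, B ∈ ℝ, and set β = ∫_ℝ R(y) cos(2ky) dy. Then for every x ∈ ℝ: ∫_ℝ R(x−y)(B + A sin²(ky)) dy = B + A( (1−β)/2 + β sin²(kx) ). -/
/-!
Write `sin² (k y) = 1/2 - cos (2 k y) / 2`. By the addition formula,
`cos (2k(x - z)) = cos (2kx) cos (2kz) + sin (2kx) sin (2kz)`, and the sine part integrates to zero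
against the even kernel `R`, so convolving `R` with `cos (2k ·)` multiplies it by `β`.
-/

open MeasureTheory Real

theorem integral_eq_zero_of_odd {E : Type*} [NormedAddCommGroup E] [NormedSpace ℝ E]
    {g : ℝ → E} (hg : ∀ x, g (-x) = -g x) : ∫ x, g x = 0 := by
  have h := integral_neg_eq_self g volume
  simp only [hg, integral_neg] at h
  linear_combination (norm := module) (-(1 / 2 : ℝ)) • h

theorem MeasureTheory.Integrable.mul_cos_const_mul {μ : Measure ℝ} {R : ℝ → ℝ}
    (hR : Integrable R μ) (ω : ℝ) : Integrable (fun y => R y * cos (ω * y)) μ :=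
  hR.mul_bdd (by fun_prop) (ae_of_all _ fun y => (norm_eq_abs _).trans_le (abs_cos_le_one _))

theorem MeasureTheory.Integrable.mul_sin_const_mul {μ : Measure ℝ} {R : ℝ → ℝ}
    (hR : Integrable R μ) (ω : ℝ) : Integrable (fun y => R y * sin (ω * y)) μ :=
  hR.mul_bdd (by fun_prop) (ae_of_all _ fun y => (norm_eq_abs _).trans_le (abs_sin_le_one _))

theorem integral_mul_sin_eq_zero_of_even {R : ℝ → ℝ} (hR : ∀ x, R (-x) = R x) (ω : ℝ) :
    ∫ y, R y * sin (ω * y) = 0 :=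
  integral_eq_zero_of_odd fun y => by rw [hR, mul_neg, sin_neg, mul_neg]

theorem integral_sub_mul_cos_of_even {R : ℝ → ℝ} (hRint : Integrable R)
    (hReven : ∀ x, R (-x) = R x) (ω x : ℝ) :
    ∫ y, R (x - y) * cos (ω * y) = (∫ y, R y * cos (ω * y)) * cos (ω * x) := by
  calc ∫ y, R (x - y) * cos (ω * y) = ∫ z, R z * cos (ω * (x - z)) := by
        simpa using (integral_sub_left_eq_self (fun z => R z * cos (ω * (x - z))) volume x)
    _ = ∫ z, (cos (ω * x) * (R z * cos (ω * z)) + sin (ω * x) * (R z * sin (ω * z))) := by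
        congr 1; ext z; rw [mul_sub, cos_sub]; ring
    _ = (∫ y, R y * cos (ω * y)) * cos (ω * x) := by
        rw [integral_add ((hRint.mul_cos_const_mul ω).const_mul _)
            ((hRint.mul_sin_const_mul ω).const_mul _), integral_const_mul, integral_const_mul,
          integral_mul_sin_eq_zero_of_even hReven]
        ring

theorem convolution_with_sin_squared_general
    (R : ℝ → ℝ) (hRint : Integrable R) (hReven : ∀ x, R (-x) = R x)
    (hR1 : (∫ x : ℝ, R x) = 1) (k : ℝ) (A B : ℝ)
    (β : ℝ) (hβ : β = ∫ y : ℝ, R y * Real.cos (2 * k * y)) :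
    ∀ x : ℝ, (∫ y : ℝ, R (x - y) * (B + A * Real.sin (k * y) ^ 2)) =
      B + A * ((1 - β) / 2 + β * Real.sin (k * x) ^ 2) := by
  intro x
  have hRx : Integrable fun y => R (x - y) := hRint.comp_sub_left x
  calc ∫ y, R (x - y) * (B + A * sin (k * y) ^ 2)
        = ∫ y, ((B + A / 2) * R (x - y) - A / 2 * (R (x - y) * cos (2 * k * y))) := by
          congr 1; ext y; rw [sin_sq_eq_half_sub, ← mul_assoc]; ring
    _ = (B + A / 2) * (∫ y, R (x - y)) - A / 2 * (β * cos (2 * k * x)) := by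
          rw [integral_sub (hRx.const_mul _) ((hRx.mul_cos_const_mul _).const_mul _),
            integral_const_mul, integral_const_mul, integral_sub_mul_cos_of_even hRint hReven, hβ]
    _ = B + A * ((1 - β) / 2 + β * sin (k * x) ^ 2) := by
          rw [integral_sub_left_eq_self R volume x, hR1, sin_sq_eq_half_sub, ← mul_assoc 2 k x]
          ring

/-- convolution of an even normalized kernel with `B + A sin²(ky)`:
`∫ R(x−y)(B + A sin²(ky)) dy = B + A((1−β)/2 + β sin²(kx))` where
`β = ∫ R(y) cos(2ky) dy`. -/
theorem convolution_with_sin_squared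
    (R : ℝ → ℝ) (hRint : Integrable R) (hReven : ∀ x, R (-x) = R x)
    (hR1 : (∫ x : ℝ, R x) = 1) (k : ℝ) (hk : k ≠ 0) (A B : ℝ)
    (β : ℝ) (hβ : β = ∫ y : ℝ, R y * Real.cos (2 * k * y)) :
    ∀ x : ℝ, (∫ y : ℝ, R (x - y) * (B + A * Real.sin (k * y) ^ 2)) =
      B + A * ((1 - β) / 2 + β * Real.sin (k * x) ^ 2) :=
  convolution_with_sin_squared_general R hRint hReven hR1 k A B β hβ
end

section
/- Let ζ : ℝ → ℝ be nonnegative, even, integrable with ∫_ℝ ζ = 1, let ε > 0, k > 0, V₀ ∈ ℝ, α ∈ {1,−1}, and set R(x;ε) = ε⁻¹ζ(x/ε) and β = ∫_ℝ R(y;ε) cos(2ky) dy. Assume β ≠ 0, set A = −V₀/(αβ), assume B ≥ max{−A, 0}, and set ω = (V₀+k²)/2 + αB − V₀/(2β). Then ψ(x,t) = (√B cos(kx) + i√(B+A) sin(kx)) e^{−iωt} satisfies, for all (x,t) ∈ ℝ², the nonlocal Gross–Pitaevskii equation i∂_tψ = −(1/2)∂²_xψ + αψ(x,t)·∫_ℝ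 R(x−y;ε)|ψ(y,t)|² dy + V₀ sin²(kx) ψ. -/
/-!
Since `|ψ|² = B + A sin²(kx) = B + A/2 - (A/2) cos 2kx` and the kernel is even with unit mass,
the nonlocal potential is `R ∗ |ψ|² = B + A/2 - (A/2) β cos 2kx`. The choice `A = -V₀/(αβ)`
makes its `cos 2kx` part cancel that of `V₀ sin²(kx) = V₀/2 - (V₀/2) cos 2kx`, so the total
potential is the constant `α (B + A/2) + V₀/2`. The spatial profile satisfies `u'' = -k² u`, so
`ψ` solves the equation exactly when `ω = k²/2 + α (B + A/2) + V₀/2`, which is the given `ω`.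
-/

open MeasureTheory Real

section EvenKernel

variable {g : ℝ → ℝ}

theorem integral_mul_sin_eq_zero_of_even_s8 (heven : ∀ z, g (-z) = g z) (c : ℝ) :
    ∫ z, g z * sin (c * z) = 0 := by
  have hodd : (fun z => g (-z) * sin (c * -z)) = fun z => -(g z * sin (c * z)) := by
    ext z; rw [heven, mul_neg, sin_neg, mul_neg]
  have h := integral_neg_eq_self (fun z => g z * sin (c * z)) volume
  rw [hodd, integral_neg] at h
  linarith

theorem MeasureTheory.Integrable.mul_cos_const_mul_s8 (hg : Integrable g) (c : ℝ) :
    Integrable fun z => g z * cos (c * z) :=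
  hg.mul_bdd (by fun_prop) (.of_forall fun z => by simpa using abs_cos_le_one (c * z))

theorem MeasureTheory.Integrable.mul_sin_const_mul_s8 (hg : Integrable g) (c : ℝ) :
    Integrable fun z => g z * sin (c * z) :=
  hg.mul_bdd (by fun_prop) (.of_forall fun z => by simpa using abs_sin_le_one (c * z))

theorem integral_sub_mul_cos_of_even_s8 (hg : Integrable g) (heven : ∀ z, g (-z) = g z)
    (c x : ℝ) :
    ∫ y, g (x - y) * cos (c * y) = (∫ z, g z * cos (c * z)) * cos (c * x) := by
  have hsub : ∫ y, g (x - y) * cos (c * y) = ∫ z, g z * cos (c * (x - z)) := by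
    rw [← integral_sub_left_eq_self _ volume x]
    simp only [sub_sub_cancel]
  have hexpand : (fun z => g z * cos (c * (x - z))) = fun z =>
      cos (c * x) * (g z * cos (c * z)) + sin (c * x) * (g z * sin (c * z)) := by
    ext z; rw [mul_sub, cos_sub]; ring
  rw [hsub, hexpand, integral_add ((hg.mul_cos_const_mul_s8 c).const_mul _)
      ((hg.mul_sin_const_mul_s8 c).const_mul _), integral_const_mul, integral_const_mul,
    integral_mul_sin_eq_zero_of_even_s8 heven]
  ring

theorem integral_sub_mul_add_mul_sin_sq_of_even (hg : Integrable g)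
    (heven : ∀ z, g (-z) = g z) (hg1 : ∫ z, g z = 1) (a b k x : ℝ) :
    ∫ y, g (x - y) * (a + b * sin (k * y) ^ 2)
      = a + b / 2 - b / 2 * (∫ z, g z * cos (2 * k * z)) * cos (2 * k * x) := by
  have hexpand : (fun y => g (x - y) * (a + b * sin (k * y) ^ 2)) = fun y =>
      (a + b / 2) * g (x - y) - b / 2 * (g (x - y) * cos (2 * k * y)) := by
    ext y; rw [sin_sq_eq_half_sub, ← mul_assoc]; ring
  have hshift : Integrable fun y => g (x - y) := hg.comp_sub_left x
  rw [hexpand, integral_sub (hshift.const_mul _) ((hshift.mul_cos_const_mul_s8 _).const_mul _),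
    integral_const_mul, integral_const_mul, integral_sub_left_eq_self g volume x, hg1,
    integral_sub_mul_cos_of_even_s8 hg heven]
  ring

end EvenKernel

section Rescaling

variable {ζ : ℝ → ℝ} {ε : ℝ}

theorem MeasureTheory.Integrable.inv_mul_comp_div (hζ : Integrable ζ) (hε : ε ≠ 0) :
    Integrable fun z => ε⁻¹ * ζ (z / ε) :=
  (hζ.comp_div hε).const_mul _

theorem integral_inv_mul_comp_div (hε : 0 < ε) :
    ∫ z, ε⁻¹ * ζ (z / ε) = ∫ z, ζ z := by
  rw [integral_const_mul, Measure.integral_comp_div, abs_of_pos hε, smul_eq_mul,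
    inv_mul_cancel_left₀ hε.ne']

end Rescaling

open Complex

noncomputable def waveProfile (a b k y : ℝ) : ℂ :=
  ↑(a * Real.cos (k * y)) + I * ↑(b * Real.sin (k * y))

theorem norm_sq_waveProfile (a b k y : ℝ) :
    ‖waveProfile a b k y‖ ^ 2 = a ^ 2 * Real.cos (k * y) ^ 2 + b ^ 2 * Real.sin (k * y) ^ 2 := by
  rw [waveProfile, Complex.sq_norm, mul_comm I, normSq_add_mul_I]
  ring

theorem hasDerivAt_waveProfile (a b k y : ℝ) :
    HasDerivAt (waveProfile a b k) (I * k * waveProfile b a k y) y := by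
  have hcos := ((Real.hasDerivAt_cos (k * y)).comp y ((hasDerivAt_id y).const_mul k)).const_mul a
  have hsin := ((Real.hasDerivAt_sin (k * y)).comp y ((hasDerivAt_id y).const_mul k)).const_mul b
  refine (hcos.ofReal_comp.add (hsin.ofReal_comp.const_mul I)).congr_deriv ?_
  rw [waveProfile]
  push_cast
  linear_combination (-(a * k : ℂ) * Complex.sin (k * y)) * I_mul_I

theorem deriv_deriv_waveProfile_mul (a b k : ℝ) (c : ℂ) (y : ℝ) :
    deriv (deriv fun y => waveProfile a b k y * c) y = -k ^ 2 * (waveProfile a b k y * c) := by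
  have hderiv : deriv (fun y => waveProfile a b k y * c) =
      fun y => I * k * waveProfile b a k y * c :=
    funext fun y => ((hasDerivAt_waveProfile a b k y).mul_const c).deriv
  rw [hderiv, (((hasDerivAt_waveProfile b a k y).const_mul (I * k)).mul_const c).deriv]
  linear_combination (k ^ 2 * waveProfile a b k y * c) * I_mul_I

theorem norm_exp_neg_I_mul_ofReal (ω t : ℝ) : ‖cexp (-I * ω * t)‖ = 1 := by
  rw [norm_exp]
  simp

theorem I_mul_deriv_mul_exp_neg_I_mul (c : ℂ) (ω t : ℝ) :
    I * deriv (fun s : ℝ => c * cexp (-I * ω * s)) t = ω * (c * cexp (-I * ω * t)) := by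
  have hphase : HasDerivAt (fun s : ℝ => -I * ω * s) (-I * ω) t := by
    simpa using (hasDerivAt_id (t : ℂ)).comp_ofReal.const_mul (-I * ω)
  rw [(hphase.cexp.const_mul c).deriv]
  linear_combination (-ω * (c * cexp (-I * ω * t))) * I_mul_I

theorem frequency_eq_kinetic_add_potential {k V₀ α β A B ω : ℝ} (hα : α ≠ 0) (hβ : β ≠ 0)
    (hA : A = -V₀ / (α * β))
    (hω : ω = (V₀ + k ^ 2) / 2 + α * B - V₀ / (2 * β)) (x : ℝ) :
    ω = k ^ 2 / 2 + α * (B + A / 2 - A / 2 * β * Real.cos (2 * k * x))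
      + V₀ * Real.sin (k * x) ^ 2 := by
  rw [hω, hA, Real.sin_sq_eq_half_sub, mul_assoc 2 k x]
  field_simp
  ring

theorem traveling_wave_solves_nonlocal_GP_general
    (ζ : ℝ → ℝ) (hζeven : ∀ x, ζ (-x) = ζ x)
    (hζint : Integrable ζ) (hζ1 : (∫ x : ℝ, ζ x) = 1)
    (ε k V₀ α : ℝ) (hε : 0 < ε) (hα : α = 1 ∨ α = -1)
    (β : ℝ) (hβ : β = ∫ y : ℝ, ε⁻¹ * ζ (y / ε) * Real.cos (2 * k * y)) (hβ0 : β ≠ 0)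
    (A : ℝ) (hA : A = -V₀ / (α * β))
    (B : ℝ) (hB : B ≥ max (-A) 0)
    (ω : ℝ) (hω : ω = (V₀ + k ^ 2) / 2 + α * B - V₀ / (2 * β))
    (ψ : ℝ → ℝ → ℂ)
    (hψ : ∀ x t : ℝ, ψ x t =
      ((↑(Real.sqrt B * Real.cos (k * x)) : ℂ)
        + Complex.I * (↑(Real.sqrt (B + A) * Real.sin (k * x)) : ℂ))
      * Complex.exp (-Complex.I * (ω : ℂ) * (t : ℂ))) :
    ∀ x t : ℝ,
      Complex.I * deriv (fun s => ψ x s) t =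
        -(1 / 2 : ℂ) * deriv (deriv (fun y => ψ y t)) x
        + (α : ℂ) * ψ x t * (↑(∫ y : ℝ, ε⁻¹ * ζ ((x - y) / ε) * ‖ψ y t‖ ^ 2) : ℂ)
        + (↑(V₀ * Real.sin (k * x) ^ 2) : ℂ) * ψ x t := by
  intro x t
  have hα0 : α ≠ 0 := by rcases hα with rfl | rfl <;> norm_num
  have hB0 : 0 ≤ B := le_of_max_le_right hB
  have hBA : 0 ≤ B + A := by linarith [le_of_max_le_left hB]
  have hψ' : ∀ y s, ψ y s = waveProfile √B √(B + A) k y * cexp (-I * ω * s) := hψ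
  have hnorm (y : ℝ) : ‖ψ y t‖ ^ 2 = B + A * Real.sin (k * y) ^ 2 := by
    rw [hψ', norm_mul, norm_exp_neg_I_mul_ofReal, mul_one, norm_sq_waveProfile,
      Real.sq_sqrt hB0, Real.sq_sqrt hBA]
    linear_combination B * Real.sin_sq_add_cos_sq (k * y)
  have hconv : ∫ y, ε⁻¹ * ζ ((x - y) / ε) * ‖ψ y t‖ ^ 2
      = B + A / 2 - A / 2 * β * Real.cos (2 * k * x) := by
    simp_rw [hnorm, hβ]
    refine integral_sub_mul_add_mul_sin_sq_of_even (hζint.inv_mul_comp_div hε.ne')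
      (fun z => by rw [neg_div, hζeven]) ?_ B A k x
    rw [integral_inv_mul_comp_div hε, hζ1]
  have htime : I * deriv (fun s => ψ x s) t = ω * ψ x t := by
    simp_rw [hψ']
    exact I_mul_deriv_mul_exp_neg_I_mul _ ω t
  have hspace : deriv (deriv fun y => ψ y t) x = -k ^ 2 * ψ x t := by
    simp_rw [hψ']
    exact deriv_deriv_waveProfile_mul _ _ k _ x
  rw [htime, hspace, hconv, frequency_eq_kinetic_add_potential hα0 hβ0 hA hω x]
  push_cast
  ring

/-- the explicit traveling-wave family
`ψ(x,t) = (√B cos(kx) + i√(B+A) sin(kx)) e^{−iωt}`, with `A = −V₀/(αβ)` and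
`ω = (V₀+k²)/2 + αB − V₀/(2β)`, solves the nonlocal Gross–Pitaevskii equation
`i∂_tψ = −(1/2)∂²_xψ + αψ·(R(·;ε)∗|ψ|²) + V₀ sin²(kx)ψ` with kernel
`R(x;ε) = ε⁻¹ζ(x/ε)`. -/
theorem traveling_wave_solves_nonlocal_GP
    (ζ : ℝ → ℝ) (hζ0 : ∀ x, 0 ≤ ζ x) (hζeven : ∀ x, ζ (-x) = ζ x)
    (hζint : Integrable ζ) (hζ1 : (∫ x : ℝ, ζ x) = 1)
    (ε k V₀ α : ℝ) (hε : 0 < ε) (hk : 0 < k) (hα : α = 1 ∨ α = -1)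
    (β : ℝ) (hβ : β = ∫ y : ℝ, ε⁻¹ * ζ (y / ε) * Real.cos (2 * k * y)) (hβ0 : β ≠ 0)
    (A : ℝ) (hA : A = -V₀ / (α * β))
    (B : ℝ) (hB : B ≥ max (-A) 0)
    (ω : ℝ) (hω : ω = (V₀ + k ^ 2) / 2 + α * B - V₀ / (2 * β))
    (ψ : ℝ → ℝ → ℂ)
    (hψ : ∀ x t : ℝ, ψ x t =
      ((↑(Real.sqrt B * Real.cos (k * x)) : ℂ)
        + Complex.I * (↑(Real.sqrt (B + A) * Real.sin (k * x)) : ℂ))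
      * Complex.exp (-Complex.I * (ω : ℂ) * (t : ℂ))) :
    ∀ x t : ℝ,
      Complex.I * deriv (fun s => ψ x s) t =
        -(1 / 2 : ℂ) * deriv (deriv (fun y => ψ y t)) x
        + (α : ℂ) * ψ x t * (↑(∫ y : ℝ, ε⁻¹ * ζ ((x - y) / ε) * ‖ψ y t‖ ^ 2) : ℂ)
        + (↑(V₀ * Real.sin (k * x) ^ 2) : ℂ) * ψ x t :=
  traveling_wave_solves_nonlocal_GP_general ζ hζeven hζint hζ1 ε k V₀ α hε hα β hβ hβ0 A hA B hB ω
    hω ψ hψ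
end

section
/- Let ζ ∈ L¹(ℝ) with |ζ̂(s)| ≤ (1+|s|)^{−1/2−δ} for some δ > 0, where ζ̂(s) = ∫_ℝ e^{−isx}ζ(x)dx, and let a > 0. Then for every μ' ∈ [0,1], lim_{μ→μ'} Σ_{j∈ℤ} | ζ̂(a(j−μ)) − ζ̂(a(j−μ')) |² = 0, where μ ranges over [0,1]. In particular the ℓ²(ℤ)-valued map μ ↦ (ζ̂(a(j−μ)))_{j∈ℤ} is continuous on [0,1]. -/
/-! Each term tends to `0` because `ζ̂` is continuous (`ζ ∈ L¹`). For `|μ - μ'| ≤ 1`, Peetre's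
inequality `1 + |x| ≤ (1 + |x - y|)(1 + |y|)` bounds `|ζ̂(a(j - μ))|²` uniformly in `μ` by a
multiple of `(1 + |a j|)^(-1 - 2δ)`, which is summable over `ℤ`; dominated convergence for
series concludes. -/

open MeasureTheory Filter

/-- The Fourier transform `ζ̂(s) = ∫ e^{−isx} ζ(x) dx`. -/
noncomputable def zetaHat (ζ : ℝ → ℝ) (s : ℝ) : ℂ :=
  ∫ x : ℝ, Complex.exp (-(↑(s * x) : ℂ) * Complex.I) * (ζ x : ℂ)

open Real Topology FourierTransform

lemma zetaHat_eq_fourier (ζ : ℝ → ℝ) (s : ℝ) :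
    zetaHat ζ s = 𝓕 (fun x ↦ (ζ x : ℂ)) (s / (2 * π)) := by
  rw [fourier_real_eq_integral_exp_smul, zetaHat]
  congr 1 with x
  rw [smul_eq_mul]
  congr 3
  push_cast
  field_simp

lemma continuous_zetaHat {ζ : ℝ → ℝ} (hζ : Integrable ζ) : Continuous (zetaHat ζ) := by
  have hF : Continuous (𝓕 (fun x ↦ (ζ x : ℂ))) :=
    VectorFourier.fourierIntegral_continuous continuous_fourierChar (innerSL ℝ).continuous₂
      hζ.ofReal
  rw [funext (zetaHat_eq_fourier ζ)]
  exact hF.comp (continuous_id.div_const _)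

lemma one_add_abs_le_mul_one_add_abs_sub (x y : ℝ) : 1 + |x| ≤ (1 + |x - y|) * (1 + |y|) := by
  have := abs_sub_abs_le_abs_sub x y
  nlinarith [abs_nonneg (x - y), abs_nonneg y, mul_nonneg (abs_nonneg (x - y)) (abs_nonneg y)]

lemma one_add_abs_sub_rpow_neg_le (x y : ℝ) {q : ℝ} (hq : 0 ≤ q) :
    (1 + |x - y|) ^ (-q) ≤ (1 + |y|) ^ q * (1 + |x|) ^ (-q) := by
  have hpos : ∀ z : ℝ, 0 < 1 + |z| := fun z ↦ by positivity
  rw [rpow_neg (hpos _).le, rpow_neg (hpos _).le, le_mul_inv_iff₀ (rpow_pos_of_pos (hpos _) _),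
    inv_mul_le_iff₀ (rpow_pos_of_pos (hpos _) _), ← mul_rpow (hpos _).le (hpos _).le]
  exact rpow_le_rpow (hpos _).le (one_add_abs_le_mul_one_add_abs_sub x y) hq

lemma summable_one_add_abs_int_rpow_neg {s : ℝ} (hs : 1 < s) :
    Summable fun n : ℤ ↦ (1 + |(n : ℝ)|) ^ (-s) := by
  have hnat : Summable fun n : ℕ ↦ (1 + (n : ℝ)) ^ (-s) := by
    have := (summable_nat_add_iff 1).mpr (summable_nat_rpow.mpr (neg_lt_neg hs))
    simpa [add_comm] using this
  refine .of_nat_of_neg ?_ ?_ <;> simpa using hnat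

lemma summable_one_add_abs_mul_int_rpow_neg {a s : ℝ} (ha : a ≠ 0) (hs : 1 < s) :
    Summable fun n : ℤ ↦ (1 + |a * n|) ^ (-s) := by
  set c := min 1 |a|
  have hc : 0 < c := lt_min one_pos (abs_pos.mpr ha)
  refine ((summable_one_add_abs_int_rpow_neg hs).mul_left (c ^ (-s))).of_nonneg_of_le
    (fun n ↦ by positivity) fun n ↦ ?_
  have hle : c * (1 + |(n : ℝ)|) ≤ 1 + |a * n| := by
    rw [abs_mul]
    nlinarith [min_le_left 1 |a|, min_le_right 1 |a|, abs_nonneg (n : ℝ)]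
  rw [← mul_rpow hc.le (by positivity)]
  exact rpow_le_rpow_of_nonpos (by positivity) hle (by linarith)

section Decay

variable {E : Type*} [NormedAddCommGroup E] {f : ℝ → E} {q : ℝ}

lemma norm_comp_mul_sub_le (hq : 0 ≤ q) (hdecay : ∀ s, ‖f s‖ ≤ (1 + |s|) ^ (-q)) (a x μ : ℝ) :
    ‖f (a * (x - μ))‖ ≤ (1 + |a * μ|) ^ q * (1 + |a * x|) ^ (-q) := by
  rw [mul_sub]
  exact (hdecay _).trans (one_add_abs_sub_rpow_neg_le _ _ hq)

theorem tendsto_tsum_norm_sub_sq_of_decay (hf : Continuous f) (hq : 1 / 2 < q)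
    (hdecay : ∀ s, ‖f s‖ ≤ (1 + |s|) ^ (-q)) {a : ℝ} (ha : a ≠ 0) (μ' : ℝ) :
    Tendsto (fun μ : ℝ ↦ ∑' j : ℤ, ‖f (a * (j - μ)) - f (a * (j - μ'))‖ ^ 2) (𝓝 μ') (𝓝 0) := by
  have hq0 : 0 ≤ q := by linarith
  set C := (1 + |a| * (|μ'| + 1)) ^ q
  have hC : ∀ μ ∈ Metric.closedBall μ' 1, (1 + |a * μ|) ^ q ≤ C := fun μ hμ ↦ by
    have : |μ| ≤ |μ'| + 1 := by
      have := abs_sub_abs_le_abs_sub μ μ'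
      rw [Metric.mem_closedBall, Real.dist_eq] at hμ
      linarith
    rw [abs_mul]
    exact rpow_le_rpow (by positivity) (by gcongr) hq0
  have hbound_summable : Summable fun j : ℤ ↦ (2 * C * (1 + |a * j|) ^ (-q)) ^ 2 := by
    refine ((summable_one_add_abs_mul_int_rpow_neg ha (s := 2 * q) (by linarith)).mul_left
      ((2 * C) ^ 2)).congr fun j ↦ ?_
    rw [mul_pow _ ((1 + |a * j|) ^ (-q)), ← rpow_natCast ((1 + |a * j|) ^ (-q)),
      ← rpow_mul (by positivity)]
    ring_nf
  have hpointwise : ∀ j : ℤ,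
      Tendsto (fun μ : ℝ ↦ ‖f (a * (j - μ)) - f (a * (j - μ'))‖ ^ 2) (𝓝 μ') (𝓝 0) := fun j ↦
    ((hf.comp (by fun_prop)).sub continuous_const).norm.pow 2 |>.tendsto' μ' 0 (by simp)
  have hdominated : ∀ᶠ μ in 𝓝 μ', ∀ j : ℤ,
      ‖‖f (a * (j - μ)) - f (a * (j - μ'))‖ ^ 2‖ ≤ (2 * C * (1 + |a * j|) ^ (-q)) ^ 2 := by
    filter_upwards [Metric.closedBall_mem_nhds μ' one_pos] with μ hμ j
    have hle : ∀ ν ∈ Metric.closedBall μ' 1, ‖f (a * (j - ν))‖ ≤ C * (1 + |a * j|) ^ (-q) :=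
      fun ν hν ↦ (norm_comp_mul_sub_le hq0 hdecay a j ν).trans
        (by gcongr; exact hC ν hν)
    rw [norm_pow, norm_norm]
    gcongr
    calc ‖f (a * (j - μ)) - f (a * (j - μ'))‖
        ≤ ‖f (a * (j - μ))‖ + ‖f (a * (j - μ'))‖ := norm_sub_le _ _
      _ ≤ 2 * C * (1 + |a * j|) ^ (-q) := by
        linarith [hle μ hμ, hle μ' (Metric.mem_closedBall_self zero_le_one)]
  simpa using tendsto_tsum_of_dominated_convergence hbound_summable hpointwise hdominated

end Decay

/-- ℓ²-continuity in the Bloch parameter `μ` of the multiplier symbols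
`ζ̂(a(j−μ))`: for every `μ' ∈ [0,1]`,
`Σ_{j∈ℤ} |ζ̂(a(j−μ)) − ζ̂(a(j−μ'))|² → 0` as `μ → μ'` within `[0,1]`. -/
theorem multiplier_symbol_l2_continuity
    (ζ : ℝ → ℝ) (hζ : Integrable ζ)
    (δ : ℝ) (hδ : 0 < δ)
    (hhat : ∀ s : ℝ, ‖zetaHat ζ s‖ ≤ (1 + |s|) ^ (-(1 / 2 : ℝ) - δ))
    (a : ℝ) (ha : 0 < a) :
    ∀ μ' ∈ Set.Icc (0:ℝ) 1,
      Tendsto (fun μ : ℝ =>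
          ∑' j : ℤ, ‖zetaHat ζ (a * ((j : ℝ) - μ)) - zetaHat ζ (a * ((j : ℝ) - μ'))‖ ^ 2)
        (nhdsWithin μ' (Set.Icc 0 1)) (nhds 0) := by
  intro μ' _
  have hdecay : ∀ s, ‖zetaHat ζ s‖ ≤ (1 + |s|) ^ (-(1 / 2 + δ)) := by
    simpa only [neg_add'] using hhat
  exact (tendsto_tsum_norm_sub_sq_of_decay (continuous_zetaHat hζ) (by linarith) hdecay
    ha.ne' μ').mono_left nhdsWithin_le_nhds
end

section
/- Let ζ ∈ L¹(ℝ) with |ζ̂(s)| ≤ (1+|s|)^{−1/2−δ} for some δ > 0, where ζ̂(s) = ∫_ℝ e^{−isx}ζ(x)dx, let k > 0, and let μ ∈ (0,1). Then lim_{ε→∞} Σ_{j∈ℤ} | ζ̂( kε(j−μ) ) |² = 0. -/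
/-!
Since `μ` is not an integer, `|j - μ|` stays away from `0`, so the bound
`‖ζ̂(s)‖² ≤ (1 + |s|)^{-(1+2δ)} ≤ |s|^{-(1+2δ)}` gives
`∑ⱼ ‖ζ̂(kε(j - μ))‖² ≤ (kε)^{-(1+2δ)} ∑ⱼ |j - μ|^{-(1+2δ)}`, where the last series
converges because `1 + 2δ > 1`.
-/

open MeasureTheory Filter Topology

lemma summable_abs_int_sub_rpow_neg (μ : ℝ) {b : ℝ} (hb : 1 < b) :
    Summable fun j : ℤ => |(j : ℝ) - μ| ^ (-b) :=
  ((Real.summable_one_div_int_add_rpow (-μ) b).mpr hb).congr fun j => by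
    rw [Real.rpow_neg (abs_nonneg _), one_div, sub_eq_add_neg]

section LatticeSum

variable {g : ℝ → ℝ} {b μ : ℝ}

lemma tsum_comp_mul_int_sub_le (hg0 : ∀ s, 0 ≤ g s)
    (hg : ∀ s ≠ 0, g s ≤ |s| ^ (-b)) (hb : 1 < b) (hμ : ∀ j : ℤ, (j : ℝ) ≠ μ)
    {t : ℝ} (ht : t ≠ 0) :
    ∑' j : ℤ, g (t * ((j : ℝ) - μ)) ≤ |t| ^ (-b) * ∑' j : ℤ, |(j : ℝ) - μ| ^ (-b) := by
  have hterm (j : ℤ) : g (t * ((j : ℝ) - μ)) ≤ |t| ^ (-b) * |(j : ℝ) - μ| ^ (-b) := by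
    rw [← Real.mul_rpow (abs_nonneg _) (abs_nonneg _), ← abs_mul]
    exact hg _ (mul_ne_zero ht (sub_ne_zero.mpr (hμ j)))
  have hmajorant := (summable_abs_int_sub_rpow_neg μ hb).mul_left (|t| ^ (-b))
  rw [← tsum_mul_left]
  exact (hmajorant.of_nonneg_of_le (fun _ => hg0 _) hterm).tsum_le_tsum hterm hmajorant

theorem tendsto_tsum_comp_mul_int_sub (hg0 : ∀ s, 0 ≤ g s)
    (hg : ∀ s ≠ 0, g s ≤ |s| ^ (-b)) (hb : 1 < b) (hμ : ∀ j : ℤ, (j : ℝ) ≠ μ)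
    {k : ℝ} (hk : k ≠ 0) :
    Tendsto (fun ε : ℝ => ∑' j : ℤ, g (k * ε * ((j : ℝ) - μ))) atTop (𝓝 0) := by
  have habs : Tendsto (fun ε : ℝ => |k * ε|) atTop atTop := by
    simpa only [abs_mul] using tendsto_abs_atTop_atTop.const_mul_atTop (abs_pos.mpr hk)
  have hbound : Tendsto (fun ε : ℝ => |k * ε| ^ (-b) * ∑' j : ℤ, |(j : ℝ) - μ| ^ (-b))
      atTop (𝓝 0) := by
    simpa using ((tendsto_rpow_neg_atTop (by linarith)).comp habs).mul_const _
  refine tendsto_of_tendsto_of_tendsto_of_le_of_le' tendsto_const_nhds hbound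
    (Eventually.of_forall fun ε => tsum_nonneg fun j => hg0 _) ?_
  filter_upwards [eventually_gt_atTop 0] with ε hε
  exact tsum_comp_mul_int_sub_le hg0 hg hb hμ (mul_ne_zero hk hε.ne')

end LatticeSum

theorem multiplier_symbol_decay_large_eps_general
    (ζ : ℝ → ℝ)
    (δ : ℝ) (hδ : 0 < δ)
    (hhat : ∀ s : ℝ, ‖zetaHat ζ s‖ ≤ (1 + |s|) ^ (-(1 / 2 : ℝ) - δ))
    (k : ℝ) (hk : 0 < k) (μ : ℝ) (hμ : μ ∈ Set.Ioo (0:ℝ) 1) :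
    Tendsto (fun ε : ℝ => ∑' j : ℤ, ‖zetaHat ζ (k * ε * ((j : ℝ) - μ))‖ ^ 2)
      atTop (nhds 0) := by
  have hμ_not_int : ∀ j : ℤ, (j : ℝ) ≠ μ := by
    rintro j rfl
    obtain ⟨hj0, hj1⟩ := hμ
    have : (0 : ℤ) < j := by exact_mod_cast hj0
    have : j < 1 := by exact_mod_cast hj1
    omega
  refine tendsto_tsum_comp_mul_int_sub (g := fun s => ‖zetaHat ζ s‖ ^ 2) (b := 1 + 2 * δ)
    (fun s => by positivity) (fun s hs => ?_) (by linarith) hμ_not_int hk.ne'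
  calc ‖zetaHat ζ s‖ ^ 2 ≤ ((1 + |s|) ^ (-(1 / 2 : ℝ) - δ)) ^ 2 :=
        pow_le_pow_left₀ (norm_nonneg _) (hhat s) 2
    _ = (1 + |s|) ^ (-(1 + 2 * δ)) := by
        rw [← Real.rpow_natCast, ← Real.rpow_mul (by positivity)]
        ring_nf
    _ ≤ |s| ^ (-(1 + 2 * δ)) :=
        Real.rpow_le_rpow_of_nonpos (abs_pos.mpr hs) (by linarith) (by linarith)

/-- decay of the twisted convolution operator norm as the nonlocality
parameter `ε → ∞`: for `μ ∈ (0,1)`, `Σ_{j∈ℤ} |ζ̂(kε(j−μ))|² → 0`. -/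
theorem multiplier_symbol_decay_large_eps
    (ζ : ℝ → ℝ) (hζ : Integrable ζ)
    (δ : ℝ) (hδ : 0 < δ)
    (hhat : ∀ s : ℝ, ‖zetaHat ζ s‖ ≤ (1 + |s|) ^ (-(1 / 2 : ℝ) - δ))
    (k : ℝ) (hk : 0 < k) (μ : ℝ) (hμ : μ ∈ Set.Ioo (0:ℝ) 1) :
    Tendsto (fun ε : ℝ => ∑' j : ℤ, ‖zetaHat ζ (k * ε * ((j : ℝ) - μ))‖ ^ 2)
      atTop (nhds 0) :=
  multiplier_symbol_decay_large_eps_general ζ δ hδ hhat k hk μ hμ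
end

section
/- Let k > 0 and let A ≥ 2.46 k². Then for every smooth 2π-periodic function f : ℝ → ℂ that is not identically zero, ∫₀^{2π} [ (k²/2)(|f'(x)|² − |f(x)|²) + 2A sin²(x) |f(x)|² ] dx > 0. -/
open MeasureTheory

/-- Pointwise Riccati-type bound: with `p(x) = (4/5)sin 2x`,
`(k²/2)p' − (k²/2)(p²+1) + 2A sin²x ≥ 0.3k²` when `A ≥ 2.46k²`. -/
lemma qfpd_Wbound (k A x : ℝ) (hA : A ≥ 2.46 * k ^ 2) :
    0.3 * k ^ 2 ≤ k ^ 2 / 2 * (8/5 * Real.cos (2*x)) -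
      k ^ 2 / 2 * ((4/5 * Real.sin (2*x)) ^ 2 + 1) + 2 * A * Real.sin x ^ 2 := by
  have hs := Real.sin_sq_add_cos_sq x
  rw [Real.sin_two_mul, Real.cos_two_mul]
  nlinarith [sq_nonneg (Real.sin x), mul_nonneg (sub_nonneg.2 hA) (sq_nonneg (Real.sin x)),
    sq_nonneg (k * Real.sin x), sq_nonneg (k * Real.sin x ^ 2), sq_nonneg k]

/-- Completing the square: `‖w‖² = ‖w + r z‖² − 2r Re(z̄ w) − r²‖z‖²`. -/
lemma qfpd_keyid (z w : ℂ) (r : ℝ) :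
    ‖w‖ ^ 2 = ‖w + (r:ℂ) * z‖ ^ 2 - r * (2 * ((starRingEnd ℂ z) * w).re) - r ^ 2 * ‖z‖ ^ 2 := by
  simp only [Complex.sq_norm, Complex.normSq_apply, Complex.add_re,
    Complex.add_im, Complex.mul_re, Complex.mul_im, Complex.ofReal_re, Complex.ofReal_im,
    Complex.conj_re, Complex.conj_im]
  ring

/-- Derivative of `x ↦ ‖f x‖²`. -/
lemma qfpd_Gderiv (f : ℝ → ℂ) (hf : ContDiff ℝ (⊤ : ℕ∞) f) (x : ℝ) :
    HasDerivAt (fun y => ‖f y‖ ^ 2) (2 * ((starRingEnd ℂ (f x)) * deriv f x).re) x := by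
  have hd : HasDerivAt f (deriv f x) x := ((hf.differentiable (by simp)) x).hasDerivAt
  have hre : HasDerivAt (fun y => (f y).re) ((deriv f x).re) x :=
    (Complex.reCLM.hasFDerivAt.comp_hasDerivAt x hd)
  have him : HasDerivAt (fun y => (f y).im) ((deriv f x).im) x :=
    (Complex.imCLM.hasFDerivAt.comp_hasDerivAt x hd)
  have h1 : HasDerivAt (fun y => (f y).re ^ 2 + (f y).im ^ 2)
      (2 * (f x).re * (deriv f x).re + 2 * (f x).im * (deriv f x).im) x := by
    have : HasDerivAt (fun y => (f y).re ^ 2 + (f y).im ^ 2) _ x := ((hre.pow 2).add (him.pow 2))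
    simpa [mul_comm, mul_assoc, mul_left_comm] using this
  have heq : (fun y => ‖f y‖ ^ 2) = fun y => (f y).re ^ 2 + (f y).im ^ 2 := by
    funext y
    rw [Complex.sq_norm, Complex.normSq_apply]; ring
  rw [heq]
  convert h1 using 1
  simp only [Complex.mul_re, Complex.conj_re, Complex.conj_im]
  ring

/-- Derivative of `x ↦ (4/5) sin (2x)`. -/
lemma qfpd_Pderiv (x : ℝ) :
    HasDerivAt (fun y => 4/5 * Real.sin (2*y)) (8/5 * Real.cos (2*x)) x := by
  have h2x : HasDerivAt (fun y : ℝ => 2*y) 2 x := by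
    simpa using (hasDerivAt_id x).const_mul (2:ℝ)
  have : HasDerivAt (fun y => 4/5 * Real.sin (2*y)) (4/5 * (Real.cos (2*x) * 2)) x :=
    ((Real.hasDerivAt_sin (2*x)).comp x h2x).const_mul (4/5 : ℝ)
  convert this using 1
  ring

/-- If a continuous `2π`-periodic function is somewhere nonzero, then `∫₀^{2π} ‖f‖² > 0`. -/
lemma qfpd_intG_pos (f : ℝ → ℂ) (hc : Continuous f) (hper : Function.Periodic f (2 * Real.pi))
    (hne : ∃ x : ℝ, f x ≠ 0) :
    0 < ∫ x in (0:ℝ)..(2 * Real.pi), ‖f x‖ ^ 2 := by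
  have hπ : 0 < 2 * Real.pi := by positivity
  obtain ⟨x₀, hx₀⟩ := hne
  obtain ⟨y, hy, hyeq⟩ := hper.exists_mem_Ico₀ hπ x₀
  -- pick y' ∈ (0, 2π] with f y' ≠ 0
  set y' : ℝ := if y = 0 then 2 * Real.pi else y with hy'def
  have hfy' : f y' ≠ 0 := by
    rw [hy'def]
    split_ifs with h
    · have : f (2 * Real.pi) = f 0 := by simpa using hper 0
      rw [this, ← h, ← hyeq]; exact hx₀
    · rw [← hyeq]; exact hx₀
  have hy'pos : 0 < y' := by
    rw [hy'def]; split_ifs with h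
    · exact hπ
    · exact lt_of_le_of_ne hy.1 (Ne.symm h)
  have hy'le : y' ≤ 2 * Real.pi := by
    rw [hy'def]; split_ifs with h
    · exact le_refl _
    · exact hy.2.le
  -- open set where f ≠ 0
  have hopen : IsOpen {x : ℝ | f x ≠ 0} := isOpen_compl_singleton.preimage hc
  obtain ⟨δ, hδpos, hball⟩ := Metric.isOpen_iff.1 hopen y' hfy'
  set a : ℝ := max (y'/2) (y' - δ/2) with hadef
  have ha0 : 0 ≤ a := le_trans (by linarith) (le_max_left _ _)
  have hay' : a < y' := by
    apply max_lt <;> linarith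
  have hGc : Continuous fun x => ‖f x‖ ^ 2 := (hc.norm).pow 2
  have hint : ∀ u v : ℝ, IntervalIntegrable (fun x => ‖f x‖ ^ 2) volume u v :=
    fun u v => hGc.intervalIntegrable u v
  have hmid : 0 < ∫ x in a..y', ‖f x‖ ^ 2 := by
    apply intervalIntegral.intervalIntegral_pos_of_pos_on (hint a y') _ hay'
    intro x hx
    have hxball : x ∈ Metric.ball y' δ := by
      rw [Metric.mem_ball, Real.dist_eq, abs_lt]
      constructor
      · have : y' - δ/2 ≤ a := le_max_right _ _
        linarith [hx.1, hx.2]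
      · linarith [hx.2]
    have hne0 := hball hxball
    exact pow_pos (norm_pos_iff.2 hne0) 2
  have h1 : 0 ≤ ∫ x in (0:ℝ)..a, ‖f x‖ ^ 2 :=
    intervalIntegral.integral_nonneg ha0 (fun x _ => by positivity)
  have h3 : 0 ≤ ∫ x in y'..(2*Real.pi), ‖f x‖ ^ 2 :=
    intervalIntegral.integral_nonneg hy'le (fun x _ => by positivity)
  have hsplit1 : (∫ x in (0:ℝ)..y', ‖f x‖ ^ 2) =
      (∫ x in (0:ℝ)..a, ‖f x‖ ^ 2) + ∫ x in a..y', ‖f x‖ ^ 2 :=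
    (intervalIntegral.integral_add_adjacent_intervals (hint 0 a) (hint a y')).symm
  have hsplit2 : (∫ x in (0:ℝ)..(2*Real.pi), ‖f x‖ ^ 2) =
      (∫ x in (0:ℝ)..y', ‖f x‖ ^ 2) + ∫ x in y'..(2*Real.pi), ‖f x‖ ^ 2 :=
    (intervalIntegral.integral_add_adjacent_intervals (hint 0 y') (hint y' (2*Real.pi))).symm
  rw [hsplit2, hsplit1]
  linarith

/-- positive definiteness of the quadratic form of
`L₀⁻ = −(k²/2)(∂²_x + 1) + 2A sin²(x)` on 2π-periodic functions when `A ≥ 2.46 k²`. -/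
theorem quadratic_form_positive_definite
    (k A : ℝ) (hk : 0 < k) (hA : A ≥ 2.46 * k ^ 2)
    (f : ℝ → ℂ) (hf : ContDiff ℝ (⊤ : ℕ∞) f) (hper : Function.Periodic f (2 * Real.pi))
    (hne : ∃ x : ℝ, f x ≠ 0) :
    0 < ∫ x in (0:ℝ)..(2 * Real.pi),
      (k ^ 2 / 2 * (‖deriv f x‖ ^ 2 - ‖f x‖ ^ 2) + 2 * A * Real.sin x ^ 2 * ‖f x‖ ^ 2) := by
  have hfc : Continuous f := hf.continuous
  have hf'c : Continuous (deriv f) := hf.continuous_deriv (by simp)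
  -- continuity of all pieces
  have hGc : Continuous fun x => ‖f x‖ ^ 2 := (hfc.norm).pow 2
  have hG'c : Continuous fun x => 2 * ((starRingEnd ℂ (f x)) * deriv f x).re :=
    continuous_const.mul (Complex.continuous_re.comp
      ((Complex.continuous_conj.comp hfc).mul hf'c))
  have hPc : Continuous fun x : ℝ => 4/5 * Real.sin (2*x) :=
    continuous_const.mul (Real.continuous_sin.comp (continuous_const.mul continuous_id))
  have hP'c : Continuous fun x : ℝ => 8/5 * Real.cos (2*x) :=
    continuous_const.mul (Real.continuous_cos.comp (continuous_const.mul continuous_id))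
  have hHc : Continuous fun x => ‖deriv f x + ((4/5 * Real.sin (2*x) : ℝ) : ℂ) * f x‖ ^ 2 :=
    ((hf'c.add ((Complex.continuous_ofReal.comp hPc).mul hfc)).norm).pow 2
  -- integrability
  have hi1 : IntervalIntegrable
      (fun x => k^2/2 * ‖deriv f x + ((4/5 * Real.sin (2*x) : ℝ) : ℂ) * f x‖ ^ 2)
      volume 0 (2*Real.pi) := (continuous_const.mul hHc).intervalIntegrable _ _
  have hi2 : IntervalIntegrable
      (fun x => k^2/2 * ((4/5 * Real.sin (2*x)) * (2 * ((starRingEnd ℂ (f x)) * deriv f x).re)))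
      volume 0 (2*Real.pi) :=
    (continuous_const.mul (hPc.mul hG'c)).intervalIntegrable _ _
  have hi3 : IntervalIntegrable
      (fun x => (2 * A * Real.sin x ^ 2 - k^2/2 * ((4/5 * Real.sin (2*x))^2 + 1)) * ‖f x‖ ^ 2)
      volume 0 (2*Real.pi) :=
    (((continuous_const.mul ((Real.continuous_sin).pow 2)).sub
      (continuous_const.mul ((hPc.pow 2).add continuous_const))).mul hGc).intervalIntegrable _ _
  -- Step 1: pointwise completion of the square
  have hsplit : (∫ x in (0:ℝ)..(2 * Real.pi),
        (k ^ 2 / 2 * (‖deriv f x‖ ^ 2 - ‖f x‖ ^ 2) + 2 * A * Real.sin x ^ 2 * ‖f x‖ ^ 2))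
      = (∫ x in (0:ℝ)..(2*Real.pi),
          k^2/2 * ‖deriv f x + ((4/5 * Real.sin (2*x) : ℝ) : ℂ) * f x‖ ^ 2)
        - (∫ x in (0:ℝ)..(2*Real.pi),
          k^2/2 * ((4/5 * Real.sin (2*x)) * (2 * ((starRingEnd ℂ (f x)) * deriv f x).re)))
        + ∫ x in (0:ℝ)..(2*Real.pi),
          (2 * A * Real.sin x ^ 2 - k^2/2 * ((4/5 * Real.sin (2*x))^2 + 1)) * ‖f x‖ ^ 2 := by
    rw [← intervalIntegral.integral_sub hi1 hi2, ← intervalIntegral.integral_add (hi1.sub hi2) hi3]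
    apply intervalIntegral.integral_congr
    intro x _
    have hkey := qfpd_keyid (f x) (deriv f x) (4/5 * Real.sin (2*x))
    simp only []
    rw [hkey]
    ring
  -- Step 2: integration by parts
  have hibp : (∫ x in (0:ℝ)..(2*Real.pi),
        (4/5 * Real.sin (2*x)) * (2 * ((starRingEnd ℂ (f x)) * deriv f x).re))
      = - ∫ x in (0:ℝ)..(2*Real.pi), (8/5 * Real.cos (2*x)) * ‖f x‖ ^ 2 := by
    have h := intervalIntegral.integral_mul_deriv_eq_deriv_mul
      (u := fun x => 4/5 * Real.sin (2*x)) (u' := fun x => 8/5 * Real.cos (2*x))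
      (v := fun x => ‖f x‖ ^ 2) (v' := fun x => 2 * ((starRingEnd ℂ (f x)) * deriv f x).re)
      (a := (0:ℝ)) (b := 2*Real.pi)
      (fun x _ => qfpd_Pderiv x) (fun x _ => qfpd_Gderiv f hf x)
      (hP'c.intervalIntegrable _ _) (hG'c.intervalIntegrable _ _)
    have hsin0 : Real.sin (2*(0:ℝ)) = 0 := by norm_num
    have hsin4 : Real.sin (2*(2*Real.pi)) = 0 := by
      have : (2:ℝ)*(2*Real.pi) = (4:ℕ) * Real.pi := by push_cast; ring
      rw [this, Real.sin_nat_mul_pi]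
    rw [h]
    simp [hsin0, hsin4, Real.sin_zero]
  -- Step 3: combine into a single nonnegative-weight integral
  have hcomb : (∫ x in (0:ℝ)..(2 * Real.pi),
        (k ^ 2 / 2 * (‖deriv f x‖ ^ 2 - ‖f x‖ ^ 2) + 2 * A * Real.sin x ^ 2 * ‖f x‖ ^ 2))
      = (∫ x in (0:ℝ)..(2*Real.pi),
          k^2/2 * ‖deriv f x + ((4/5 * Real.sin (2*x) : ℝ) : ℂ) * f x‖ ^ 2)
        + ∫ x in (0:ℝ)..(2*Real.pi),
          (k^2/2 * (8/5 * Real.cos (2*x)) - k^2/2 * ((4/5 * Real.sin (2*x))^2 + 1)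
            + 2 * A * Real.sin x ^ 2) * ‖f x‖ ^ 2 := by
    rw [hsplit]
    have h2 : (∫ x in (0:ℝ)..(2*Real.pi),
        k^2/2 * ((4/5 * Real.sin (2*x)) * (2 * ((starRingEnd ℂ (f x)) * deriv f x).re)))
        = k^2/2 * ∫ x in (0:ℝ)..(2*Real.pi),
          (4/5 * Real.sin (2*x)) * (2 * ((starRingEnd ℂ (f x)) * deriv f x).re) :=
      intervalIntegral.integral_const_mul _ _
    rw [h2, hibp]
    have h3 : (∫ x in (0:ℝ)..(2*Real.pi),
        (k^2/2 * (8/5 * Real.cos (2*x)) - k^2/2 * ((4/5 * Real.sin (2*x))^2 + 1)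
          + 2 * A * Real.sin x ^ 2) * ‖f x‖ ^ 2)
        = (∫ x in (0:ℝ)..(2*Real.pi), k^2/2 * ((8/5 * Real.cos (2*x)) * ‖f x‖ ^ 2))
          + ∫ x in (0:ℝ)..(2*Real.pi),
            (2 * A * Real.sin x ^ 2 - k^2/2 * ((4/5 * Real.sin (2*x))^2 + 1)) * ‖f x‖ ^ 2 := by
      rw [← intervalIntegral.integral_add
        (f := fun x => k^2/2 * ((8/5 * Real.cos (2*x)) * ‖f x‖ ^ 2))
        ((continuous_const.mul (hP'c.mul hGc)).intervalIntegrable _ _) hi3]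
      apply intervalIntegral.integral_congr
      intro x _
      ring
    rw [h3]
    simp only [intervalIntegral.integral_const_mul]
    ring
  rw [hcomb]
  -- Step 4: bounds
  have hterm1 : 0 ≤ ∫ x in (0:ℝ)..(2*Real.pi),
      k^2/2 * ‖deriv f x + ((4/5 * Real.sin (2*x) : ℝ) : ℂ) * f x‖ ^ 2 :=
    intervalIntegral.integral_nonneg (by positivity) (fun x _ => by positivity)
  have hWmono : (∫ x in (0:ℝ)..(2*Real.pi), 0.3 * k^2 * ‖f x‖ ^ 2)
      ≤ ∫ x in (0:ℝ)..(2*Real.pi),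
        (k^2/2 * (8/5 * Real.cos (2*x)) - k^2/2 * ((4/5 * Real.sin (2*x))^2 + 1)
          + 2 * A * Real.sin x ^ 2) * ‖f x‖ ^ 2 := by
    have hiW : IntervalIntegrable (fun x =>
        (k^2/2 * (8/5 * Real.cos (2*x)) - k^2/2 * ((4/5 * Real.sin (2*x))^2 + 1)
          + 2 * A * Real.sin x ^ 2) * ‖f x‖ ^ 2) volume 0 (2*Real.pi) := by
      apply Continuous.intervalIntegrable
      exact (((continuous_const.mul hP'c).sub
          (continuous_const.mul ((hPc.pow 2).add continuous_const))).add
        (continuous_const.mul (Real.continuous_sin.pow 2))).mul hGc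
    apply intervalIntegral.integral_mono_on (by positivity)
      ((continuous_const.mul hGc).intervalIntegrable _ _) hiW
    intro x _
    exact mul_le_mul_of_nonneg_right (qfpd_Wbound k A x hA) (by positivity)
  have hGpos : 0 < ∫ x in (0:ℝ)..(2*Real.pi), ‖f x‖ ^ 2 := qfpd_intG_pos f hfc hper hne
  have hconst : (∫ x in (0:ℝ)..(2*Real.pi), 0.3 * k^2 * ‖f x‖ ^ 2)
      = 0.3 * k^2 * ∫ x in (0:ℝ)..(2*Real.pi), ‖f x‖ ^ 2 :=
    intervalIntegral.integral_const_mul _ _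
  have hk2 : 0 < 0.3 * k^2 := by positivity
  nlinarith [mul_pos hk2 hGpos]
end
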